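/- arXiv:2206.03855 — 6 statements merged into one kernel-verified Lean document; each statement's English description precedes it below -/
import Mathlib

section
/- If a^2 - 3b > 0, then any three real roots x1 ≥ x2 ≥ x3 of x^3 + ax^2 + bx + c satisfy x1 - x3 ≤ (2√3/3)√(a^2 - 3b), i.e. the three real roots of the cubic lie in an interval of length at most the side of the Siebeck–Marden–Northshield triangle. -/
theorem cubic_root_interval_max_length (a b c x1 x2 x3 : ℝ)
    (hab : a^2 - 3*b > 0)
    (h12 : x1 ≥ x2) (h23 : x2 ≥ x3)
    (hfac : ∀ x : ℝ, x^3 + a*x^2 + b*x + c = (x - x1) * (x - x2) * (x - x3)) :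
    x1 - x3 ≤ (2 * Real.sqrt 3 / 3) * Real.sqrt (a^2 - 3*b) := by
  have h0 := hfac 0
  have h1 := hfac 1
  have hm1 := hfac (-1)
  have h2 := hfac 2
  have ha : a = -(x1 + x2 + x3) := by ring_nf at h0 h1 hm1 h2 ⊢; linarith
  have hb : b = x1*x2 + x1*x3 + x2*x3 := by ring_nf at h0 h1 hm1 h2 ⊢; linarith
  have hkey : (x1 - x3)^2 ≤ (4/3) * (a^2 - 3*b) := by
    subst ha hb; nlinarith [sq_nonneg (x1 - 2*x2 + x3), sq_nonneg (x1 - x2), sq_nonneg (x2 - x3)]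
  have h3 : Real.sqrt 3 ^ 2 = 3 := Real.sq_sqrt (by norm_num)
  have hs : Real.sqrt (a^2 - 3*b) ^ 2 = a^2 - 3*b := Real.sq_sqrt hab.le
  have hrhs : ((2 * Real.sqrt 3 / 3) * Real.sqrt (a^2 - 3*b))^2 = (4/3) * (a^2 - 3*b) := by
    field_simp; nlinarith [h3, hs]
  have hrn : 0 ≤ (2 * Real.sqrt 3 / 3) * Real.sqrt (a^2 - 3*b) := by
    positivity
  nlinarith [hkey, hrhs, hrn, sq_nonneg (x1 - x3 - (2 * Real.sqrt 3 / 3) * Real.sqrt (a^2 - 3*b))]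
end

section
/- If the cubic x^3 + ax^2 + bx + c has three real roots x1 ≥ x2 ≥ x3 (not all equal), then x1 - x3 ≥ √(a^2 - 3b), i.e. the roots span an interval of length at least the height of the Siebeck–Marden–Northshield triangle. -/
theorem cubic_root_interval_min_length (a b c x1 x2 x3 : ℝ)
    (h12 : x1 ≥ x2) (h23 : x2 ≥ x3) (h13 : x1 > x3)
    (hfac : ∀ x : ℝ, x^3 + a*x^2 + b*x + c = (x - x1) * (x - x2) * (x - x3)) :
    x1 - x3 ≥ Real.sqrt (a^2 - 3*b) := by
  have h0 := hfac 0
  have h1 := hfac 1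
  have h2 := hfac (-1)
  have h3 := hfac 2
  have ha : a = -(x1 + x2 + x3) := by nlinarith [h0, h1, h2, h3]
  have hb : b = x1*x2 + x2*x3 + x1*x3 := by nlinarith [h0, h1, h2, h3]
  have key : a^2 - 3*b ≤ (x1 - x3)^2 := by subst ha hb; nlinarith [mul_nonneg (sub_nonneg.2 h12) (sub_nonneg.2 h23)]
  calc Real.sqrt (a^2 - 3*b) ≤ Real.sqrt ((x1 - x3)^2) := Real.sqrt_le_sqrt key
    _ = x1 - x3 := Real.sqrt_sq (by linarith)
end

section
/- The discriminant Δ of the quartic x^4 + ax^3 + bx^2 + cx + d, viewed as a cubic polynomial in d with leading coefficient 256, has discriminant Δ_3 = -314928·(a^3 - 4ab + 8c)^2·[4c^2 + a(a^2-4b)c - (b^2/3)(a^2 - 32b/9)]^3. -/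
theorem quartic_discriminant_cubic_in_d_discriminant (a b c : ℝ) :
    let A : ℝ := 256
    let B : ℝ := -27*a^4 + 144*a^2*b - 192*a*c - 128*b^2
    let C : ℝ := 2*(9*a^3*b*c - 2*a^2*b^3 - 3*a^2*c^2 - 40*a*b^2*c + 8*b^4 + 72*b*c^2)
    let D : ℝ := -4*a^3*c^3 + a^2*b^2*c^2 + 18*a*b*c^3 - 4*b^3*c^2 - 27*c^4
    18*A*B*C*D - 4*B^3*D + B^2*C^2 - 4*A*C^3 - 27*A^2*D^2 =
      -314928 * (a^3 - 4*a*b + 8*c)^2 *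
        (4*c^2 + a*(a^2 - 4*b)*c - (b^2/3) * (a^2 - 32*b/9))^3 := by
  intro A B C D
  simp only [A, B, C, D]
  ring
end

section
/- If 3a^2 - 8b > 0, then the quadratic 4c^2 + a(a^2-4b)c - (b^2/3)(a^2 - 32b/9) in c has exactly the two roots C_{1,2} = -a^3/8 + ab/2 ± (√3/72)√((3a^2-8b)^3). -/
theorem quadratic_in_c_roots (a b : ℝ) (hab : 3*a^2 - 8*b > 0) :
    ∀ c : ℝ,
      4*c^2 + a*(a^2 - 4*b)*c - (b^2/3) * (a^2 - 32*b/9) = 0 ↔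
        c = -a^3/8 + a*b/2 + (Real.sqrt 3 / 72) * Real.sqrt ((3*a^2 - 8*b)^3) ∨
        c = -a^3/8 + a*b/2 - (Real.sqrt 3 / 72) * Real.sqrt ((3*a^2 - 8*b)^3) := by
  have h3 : (Real.sqrt 3)^2 = 3 := Real.sq_sqrt (by norm_num)
  have hX : (0:ℝ) ≤ (3*a^2 - 8*b)^3 := by positivity
  have hs : (Real.sqrt ((3*a^2 - 8*b)^3))^2 = (3*a^2 - 8*b)^3 := Real.sq_sqrt hX
  intro c
  set r := Real.sqrt 3 / 72 * Real.sqrt ((3*a^2 - 8*b)^3) with hr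
  have hr2 : r^2 = (3*a^2 - 8*b)^3 / 1728 := by
    rw [hr]; rw [mul_pow, div_pow, h3]; rw [hs]; ring
  constructor
  · intro h
    have hfac : (c - (-a^3/8 + a*b/2 + r)) * (c - (-a^3/8 + a*b/2 - r)) = 0 := by
      nlinarith [hr2, h]
    rcases mul_eq_zero.mp hfac with h1 | h1
    · left; linarith
    · right; linarith
  · rintro (h | h) <;> subst h <;> nlinarith [hr2]
end

section
/- If the quartic x^4 + ax^3 + bx^2 + cx + d has four real roots (counted with multiplicity), then every root lies in the closed interval [-a/4 - (√3/4)√(3a^2-8b), -a/4 + (√3/4)√(3a^2-8b)]. In particular 3a^2 - 8b ≥ 0. -/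
lemma quartic_aux (a b y u v w : ℝ)
    (ha : a = -(y + u + v + w))
    (hb : b = y*u + y*v + y*w + u*v + u*w + v*w) :
    -a/4 - (Real.sqrt 3 / 4) * Real.sqrt (3*a^2 - 8*b) ≤ y ∧
    y ≤ -a/4 + (Real.sqrt 3 / 4) * Real.sqrt (3*a^2 - 8*b) := by
  subst ha hb
  set a := -(y + u + v + w) with hadef
  set b := y*u + y*v + y*w + u*v + u*w + v*w with hbdef
  have h38 : 0 ≤ 3*a^2 - 8*b := by
    rw [hadef, hbdef]
    nlinarith [sq_nonneg (y-u), sq_nonneg (y-v), sq_nonneg (y-w),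
      sq_nonneg (u-v), sq_nonneg (u-w), sq_nonneg (v-w)]
  set R := (Real.sqrt 3 / 4) * Real.sqrt (3*a^2 - 8*b) with hRdef
  have hR0 : 0 ≤ R := by positivity
  have hR2 : R^2 = 3/16 * (3*a^2 - 8*b) := by
    rw [hRdef, mul_pow, div_pow,
      Real.sq_sqrt (by norm_num : (0:ℝ) ≤ 3), Real.sq_sqrt h38]
    ring
  have hsq : (y + a/4)^2 ≤ R^2 := by
    rw [hR2, hadef, hbdef]
    nlinarith [sq_nonneg (u-v), sq_nonneg (u-w), sq_nonneg (v-w)]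
  have habs : |y + a/4| ≤ R := by
    rw [← Real.sqrt_sq_eq_abs]
    calc Real.sqrt ((y + a/4)^2) ≤ Real.sqrt (R^2) := Real.sqrt_le_sqrt hsq
      _ = R := Real.sqrt_sq hR0
  obtain ⟨h1, h2⟩ := abs_le.mp habs
  constructor <;> linarith

theorem quartic_root_bounds (a b c d x1 x2 x3 x4 : ℝ)
    (hfac : ∀ x : ℝ,
      x^4 + a*x^3 + b*x^2 + c*x + d = (x - x1) * (x - x2) * (x - x3) * (x - x4)) :
    3*a^2 - 8*b ≥ 0 ∧
    ∀ y ∈ ({x1, x2, x3, x4} : Set ℝ),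
      -a/4 - (Real.sqrt 3 / 4) * Real.sqrt (3*a^2 - 8*b) ≤ y ∧
      y ≤ -a/4 + (Real.sqrt 3 / 4) * Real.sqrt (3*a^2 - 8*b) := by
  have ha : a = -(x1 + x2 + x3 + x4) := by
    linear_combination (-1/6 : ℝ) * hfac 1 + (1/6 : ℝ) * hfac (-1)
      + (1/12 : ℝ) * hfac 2 - (1/12 : ℝ) * hfac (-2)
  have hb : b = x1*x2 + x1*x3 + x1*x4 + x2*x3 + x2*x4 + x3*x4 := by
    linear_combination (2/3 : ℝ) * hfac 1 + (2/3 : ℝ) * hfac (-1)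
      - (1/24 : ℝ) * hfac 2 - (1/24 : ℝ) * hfac (-2) - (5/4 : ℝ) * hfac 0
  refine ⟨?_, ?_⟩
  · rw [ha, hb]
    nlinarith [sq_nonneg (x1-x2), sq_nonneg (x1-x3), sq_nonneg (x1-x4),
      sq_nonneg (x2-x3), sq_nonneg (x2-x4), sq_nonneg (x3-x4)]
  · rintro y (rfl | rfl | rfl | rfl)
    · exact quartic_aux a b y x2 x3 x4 (by linear_combination ha)
        (by linear_combination hb)
    · exact quartic_aux a b y x1 x3 x4 (by linear_combination ha)
        (by linear_combination hb)
    · exact quartic_aux a b y x1 x2 x4 (by linear_combination ha)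
        (by linear_combination hb)
    · exact quartic_aux a b y x1 x2 x3 (by linear_combination ha)
        (by linear_combination hb)
end

section
/- If the quartic x^4 + ax^3 + bx^2 + cx + d has four real roots x1 ≥ x2 ≥ x3 ≥ x4, then x1 - x4 ≤ (√2/2)√(3a^2 - 8b). -/
theorem quartic_root_interval_max_length (a b c d x1 x2 x3 x4 : ℝ)
    (h12 : x1 ≥ x2) (h23 : x2 ≥ x3) (h34 : x3 ≥ x4)
    (hfac : ∀ x : ℝ,
      x^4 + a*x^3 + b*x^2 + c*x + d = (x - x1) * (x - x2) * (x - x3) * (x - x4)) :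
    x1 - x4 ≤ (Real.sqrt 2 / 2) * Real.sqrt (3*a^2 - 8*b) := by
  have ha : a = -(x1 + x2 + x3 + x4) := by
    linear_combination (hfac 2 - hfac (-2) - 2*(hfac 1) + 2*(hfac (-1))) / 12
  have hb : b = x1*x2 + x1*x3 + x1*x4 + x2*x3 + x2*x4 + x3*x4 := by
    linear_combination (hfac 1 + hfac (-1) - 2*(hfac 0)) / 2
  have key : 2 * (x1 - x4)^2 ≤ 3*a^2 - 8*b := by
    rw [ha, hb]
    nlinarith [sq_nonneg (x1 - x2 - x3 + x4), sq_nonneg (x2 - x3)]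
  set M := 3*a^2 - 8*b with hM
  have h14 : 0 ≤ x1 - x4 := by linarith
  have hMnn : 0 ≤ M := by nlinarith [sq_nonneg (x1 - x4)]
  have h2 : Real.sqrt 2 * Real.sqrt 2 = 2 := Real.mul_self_sqrt (by norm_num)
  have h2pos : (0:ℝ) < Real.sqrt 2 := Real.sqrt_pos.2 (by norm_num)
  have e : Real.sqrt 2 / 2 * Real.sqrt M = Real.sqrt (M/2) := by
    rw [Real.sqrt_div hMnn]
    field_simp
    linear_combination Real.sqrt M * h2
  rw [e]
  exact (Real.le_sqrt h14 (by linarith)).2 (by linarith)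
end
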